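/- arXiv:2212.13999 — 9 statements merged into one kernel-verified Lean document; each statement's English description precedes it below -/
import Mathlib

section
/- Let X be a measurable space, K a kernel on X, and w : X → [0,∞] a Borel function such that K satisfies the domination principle relative to w. Let u, v, f : X → ℝ be Borel functions such that K|f| < ∞ pointwise, u + Kf = v, the set {u < 0} is contained in {f ≤ 0}, and w ≥ v pointwise. Then v ≤ u + w on X. -/
/-!
Write `Kf = Kf⁺ - Kf⁻`. Where `f > 0` the hypothesis on `{u < 0}` forces `u ≥ 0`, so there
`Kf⁺ ≤ Kf⁻ + Kf = Kf⁻ + (v - u) ≤ Kf⁻ + w`. The domination principle for `g = f⁺`, `h = f⁻`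
(note `{f⁺ > 0} = {f > 0}`) extends this inequality to all of `X`, i.e. `v - u = Kf ≤ w`.
-/

open MeasureTheory ProbabilityTheory
open scoped ENNReal

/-- `K` satisfies the domination principle relative to `w`: if `Kg ≤ Kh + w` holds at
every point of `{g > 0}` (for Borel `g, h : X → [0,∞]`), then it holds everywhere. -/
def DomPrinciple {X : Type*} [MeasurableSpace X] (K : Kernel X X) (w : X → ℝ≥0∞) : Prop :=
  ∀ g h : X → ℝ≥0∞, Measurable g → Measurable h →
    (∀ x, 0 < g x → ∫⁻ y, g y ∂(K x) ≤ (∫⁻ y, h y ∂(K x)) + w x) →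
    ∀ x, ∫⁻ y, g y ∂(K x) ≤ (∫⁻ y, h y ∂(K x)) + w x

section PosNegParts

variable {α : Type*} [MeasurableSpace α] {μ : Measure α} {f : α → ℝ}

theorem ofReal_integral_eq_lintegral_ofReal_sub_lintegral_ofReal_neg (hf : Integrable f μ) :
    ENNReal.ofReal (∫ a, f a ∂μ) =
      (∫⁻ a, ENNReal.ofReal (f a) ∂μ) - ∫⁻ a, ENNReal.ofReal (-f a) ∂μ := by
  rw [integral_eq_lintegral_pos_part_sub_lintegral_neg_part hf,
    ENNReal.ofReal_sub _ ENNReal.toReal_nonneg, ENNReal.ofReal_toReal hf.lintegral_lt_top.ne,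
    ENNReal.ofReal_toReal hf.fun_neg.lintegral_lt_top.ne]

theorem lintegral_ofReal_le_lintegral_ofReal_neg_add (hf : Integrable f μ) :
    ∫⁻ a, ENNReal.ofReal (f a) ∂μ ≤
      (∫⁻ a, ENNReal.ofReal (-f a) ∂μ) + ENNReal.ofReal (∫ a, f a ∂μ) := by
  rw [ofReal_integral_eq_lintegral_ofReal_sub_lintegral_ofReal_neg hf]
  exact le_add_tsub

end PosNegParts

theorem DomPrinciple.ofReal_integral_le {X : Type*} [MeasurableSpace X] {K : Kernel X X}
    {w : X → ℝ≥0∞} (hdom : DomPrinciple K w) {f : X → ℝ} (hf : Measurable f)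
    (hint : ∀ x, Integrable f (K x))
    (hpos : ∀ x, 0 < f x → ENNReal.ofReal (∫ y, f y ∂(K x)) ≤ w x) (x : X) :
    ENNReal.ofReal (∫ y, f y ∂(K x)) ≤ w x := by
  have hdom_pos : ∀ x, 0 < ENNReal.ofReal (f x) →
      ∫⁻ y, ENNReal.ofReal (f y) ∂(K x) ≤ (∫⁻ y, ENNReal.ofReal (-f y) ∂(K x)) + w x :=
    fun x hx => (lintegral_ofReal_le_lintegral_ofReal_neg_add (hint x)).trans
      (add_le_add_right (hpos x (ENNReal.ofReal_pos.mp hx)) _)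
  rw [ofReal_integral_eq_lintegral_ofReal_sub_lintegral_ofReal_neg (hint x)]
  exact tsub_le_iff_left.mpr
    (hdom _ _ hf.ennreal_ofReal hf.neg.ennreal_ofReal hdom_pos x)

theorem stmt_1_general {X : Type*} [MeasurableSpace X] (K : Kernel X X)
    (w : X → ℝ≥0∞) (hdom : DomPrinciple K w)
    (u v f : X → ℝ) (hf : Measurable f)
    (hfin : ∀ x, ∫⁻ y, ENNReal.ofReal |f y| ∂(K x) < ⊤)
    (heq : ∀ x, u x + ∫ y, f y ∂(K x) = v x)
    (hsub : {x | u x < 0} ⊆ {x | f x ≤ 0})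
    (hwv : ∀ x, ENNReal.ofReal (v x) ≤ w x) :
    ∀ x, ENNReal.ofReal (v x - u x) ≤ w x := by
  have hint : ∀ x, Integrable f (K x) := fun x =>
    ⟨hf.aestronglyMeasurable, by
      simpa only [hasFiniteIntegral_iff_enorm, Real.enorm_eq_ofReal_abs] using hfin x⟩
  have hKf : ∀ x, ∫ y, f y ∂(K x) = v x - u x := fun x => eq_sub_of_add_eq' (heq x)
  have hpos : ∀ x, 0 < f x → ENNReal.ofReal (∫ y, f y ∂(K x)) ≤ w x := fun x hfx => by
    have hux : 0 ≤ u x := not_lt.mp fun hneg => (hsub hneg).not_gt hfx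
    rw [hKf x]
    exact (ENNReal.ofReal_le_ofReal (by linarith)).trans (hwv x)
  intro x
  rw [← hKf x]
  exact hdom.ofReal_integral_le hf hint hpos x

theorem stmt_1 {X : Type*} [MeasurableSpace X] (K : Kernel X X)
    (w : X → ℝ≥0∞) (hw : Measurable w) (hdom : DomPrinciple K w)
    (u v f : X → ℝ) (hu : Measurable u) (hv : Measurable v) (hf : Measurable f)
    (hfin : ∀ x, ∫⁻ y, ENNReal.ofReal |f y| ∂(K x) < ⊤)
    (heq : ∀ x, u x + ∫ y, f y ∂(K x) = v x)
    (hsub : {x | u x < 0} ⊆ {x | f x ≤ 0})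
    (hwv : ∀ x, ENNReal.ofReal (v x) ≤ w x) :
    ∀ x, ENNReal.ofReal (v x - u x) ≤ w x :=
  stmt_1_general K w hdom u v f hf hfin heq hsub hwv
end

section
/- Let X be a measurable space and K a kernel on X. Let φ : X × ℝ → ℝ be Borel measurable with φ(x,0) = 0 for all x and sign-preserving, i.e. t·φ(x,t) ≥ 0 for all x ∈ X and t ∈ ℝ. Let u, v : X → ℝ be Borel with K|φ(·,u)| < ∞ pointwise and u + Kφ(·,u) = v. Suppose w₁, w₂ : X → [0,∞] are Borel functions with w₁ ≥ v⁺ := max(v,0) and w₂ ≥ v⁻ := max(−v,0), and K satisfies the domination principle relative to w₁ and relative to w₂. Then |u| ≤ w₁ + w₂ on X. -/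
open MeasureTheory ProbabilityTheory
open scoped ENNReal

/-!
Write `f = φ(·,u) = f⁺ - f⁻`, so that `u = v - Kf⁺ + Kf⁻` with both integrals finite.
Where `f⁺ > 0` the sign condition forces `u > 0`, hence `Kf⁺ - Kf⁻ = v - u ≤ v⁺ ≤ w₁`
there, and the domination principle spreads `Kf⁺ ≤ Kf⁻ + w₁` to all of `X`; symmetrically
`Kf⁻ ≤ Kf⁺ + w₂`. Then `u ≤ v⁺ + (Kf⁻ - Kf⁺) ≤ w₁ + w₂` and `-u ≤ v⁻ + (Kf⁺ - Kf⁻) ≤ w₂ + w₁`.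
-/

lemma pos_of_apply_pos {ψ : ℝ → ℝ} (h0 : ψ 0 = 0) (hsign : ∀ t, 0 ≤ t * ψ t) {t : ℝ}
    (ht : 0 < ψ t) : 0 < t := by
  rcases lt_trichotomy t 0 with hlt | rfl | hgt
  · nlinarith [hsign t]
  · exact absurd h0 ht.ne'
  · exact hgt

lemma neg_of_apply_neg {ψ : ℝ → ℝ} (h0 : ψ 0 = 0) (hsign : ∀ t, 0 ≤ t * ψ t) {t : ℝ}
    (ht : ψ t < 0) : t < 0 := by
  rcases lt_trichotomy t 0 with hlt | rfl | hgt
  · exact hlt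
  · exact absurd h0 ht.ne
  · nlinarith [hsign t]

section

variable {X : Type*} [MeasurableSpace X]

lemma ofReal_integral_eq_lintegral_sub {μ : Measure X} {f : X → ℝ} (hf : Integrable f μ) :
    ENNReal.ofReal (∫ y, f y ∂μ) =
      (∫⁻ y, ENNReal.ofReal (f y) ∂μ) - ∫⁻ y, ENNReal.ofReal (-f y) ∂μ := by
  rw [integral_eq_lintegral_pos_part_sub_lintegral_neg_part hf,
    ENNReal.ofReal_sub _ ENNReal.toReal_nonneg, ENNReal.ofReal_toReal hf.lintegral_lt_top.ne,
    ENNReal.ofReal_toReal hf.fun_neg.lintegral_lt_top.ne]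

lemma ofReal_le_add_of_add_integral_eq {μ : Measure X} {f : X → ℝ} (hf : Integrable f μ)
    {u v : ℝ} {w w' : ℝ≥0∞} (heq : u + ∫ y, f y ∂μ = v) (hv : ENNReal.ofReal v ≤ w)
    (hdom : ∫⁻ y, ENNReal.ofReal (-f y) ∂μ ≤ (∫⁻ y, ENNReal.ofReal (f y) ∂μ) + w') :
    ENNReal.ofReal u ≤ w + w' := by
  have hu : u = v + ∫ y, -f y ∂μ := by rw [integral_neg]; linarith
  calc ENNReal.ofReal u ≤ ENNReal.ofReal v + ENNReal.ofReal (∫ y, -f y ∂μ) :=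
        hu ▸ ENNReal.ofReal_add_le
    _ ≤ w + w' := by
        rw [ofReal_integral_eq_lintegral_sub hf.fun_neg]
        simp only [neg_neg]
        exact add_le_add hv (tsub_le_iff_left.2 hdom)

lemma lintegral_ofReal_le_of_domPrinciple {K : Kernel X X} {w : X → ℝ≥0∞}
    (hdom : DomPrinciple K w) {f u v : X → ℝ} (hf : Measurable f)
    (hint : ∀ x, Integrable f (K x)) (hsign : ∀ y, 0 < f y → 0 < u y)
    (heq : ∀ x, u x + ∫ y, f y ∂(K x) = v x) (hv : ∀ x, ENNReal.ofReal (v x) ≤ w x) (x : X) :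
    ∫⁻ y, ENNReal.ofReal (f y) ∂(K x) ≤ (∫⁻ y, ENNReal.ofReal (-f y) ∂(K x)) + w x := by
  refine hdom _ _ hf.ennreal_ofReal hf.neg.ennreal_ofReal (fun x hx => ?_) x
  have hux : 0 < u x := hsign x (ENNReal.ofReal_pos.1 hx)
  have hfv : ENNReal.ofReal (∫ y, f y ∂(K x)) ≤ w x :=
    (ENNReal.ofReal_le_ofReal (by linarith [heq x])).trans (hv x)
  rw [ofReal_integral_eq_lintegral_sub (hint x)] at hfv
  exact tsub_le_iff_left.1 hfv

end

theorem stmt_2_general {X : Type*} [MeasurableSpace X] (K : Kernel X X)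
    (φ : X → ℝ → ℝ) (hφm : Measurable (Function.uncurry φ))
    (hφ0 : ∀ x, φ x 0 = 0) (hsign : ∀ x t, 0 ≤ t * φ x t)
    (u v : X → ℝ) (hu : Measurable u)
    (hfin : ∀ x, ∫⁻ y, ENNReal.ofReal |φ y (u y)| ∂(K x) < ⊤)
    (heq : ∀ x, u x + ∫ y, φ y (u y) ∂(K x) = v x)
    (w₁ w₂ : X → ℝ≥0∞)
    (hvw₁ : ∀ x, ENNReal.ofReal (max (v x) 0) ≤ w₁ x)
    (hvw₂ : ∀ x, ENNReal.ofReal (max (-v x) 0) ≤ w₂ x)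
    (hdom₁ : DomPrinciple K w₁) (hdom₂ : DomPrinciple K w₂) :
    ∀ x, ENNReal.ofReal |u x| ≤ w₁ x + w₂ x := by
  have hf : Measurable fun y => φ y (u y) := hφm.comp (measurable_id.prodMk hu)
  have hint : ∀ x, Integrable (fun y => φ y (u y)) (K x) := fun x =>
    ⟨hf.aestronglyMeasurable, (hasFiniteIntegral_iff_norm _).2 (hfin x)⟩
  have hv₁ : ∀ x, ENNReal.ofReal (v x) ≤ w₁ x := fun x =>
    (ENNReal.ofReal_le_ofReal (le_max_left _ _)).trans (hvw₁ x)
  have hv₂ : ∀ x, ENNReal.ofReal (-v x) ≤ w₂ x := fun x =>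
    (ENNReal.ofReal_le_ofReal (le_max_left _ _)).trans (hvw₂ x)
  have hneg_eq : ∀ x, -u x + ∫ y, -φ y (u y) ∂(K x) = -v x := fun x => by
    rw [integral_neg]; linarith [heq x]
  have hle₁ := lintegral_ofReal_le_of_domPrinciple hdom₁ hf hint
    (fun y => pos_of_apply_pos (hφ0 y) (hsign y)) heq hv₁
  have hle₂ := lintegral_ofReal_le_of_domPrinciple hdom₂ hf.fun_neg (fun x => (hint x).fun_neg)
    (fun y hy => neg_pos.2 (neg_of_apply_neg (hφ0 y) (hsign y) (neg_pos.1 hy))) hneg_eq hv₂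
  simp only [neg_neg] at hle₂
  intro x
  rw [abs_eq_max_neg, ENNReal.ofReal_max]
  refine max_le (ofReal_le_add_of_add_integral_eq (hint x) (heq x) (hv₁ x) (hle₂ x)) ?_
  rw [add_comm]
  exact ofReal_le_add_of_add_integral_eq (hint x).fun_neg (hneg_eq x) (hv₂ x)
    (by simpa only [neg_neg] using hle₁ x)

theorem stmt_2 {X : Type*} [MeasurableSpace X] (K : Kernel X X)
    (φ : X → ℝ → ℝ) (hφm : Measurable (Function.uncurry φ))
    (hφ0 : ∀ x, φ x 0 = 0) (hsign : ∀ x t, 0 ≤ t * φ x t)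
    (u v : X → ℝ) (hu : Measurable u) (hv : Measurable v)
    (hfin : ∀ x, ∫⁻ y, ENNReal.ofReal |φ y (u y)| ∂(K x) < ⊤)
    (heq : ∀ x, u x + ∫ y, φ y (u y) ∂(K x) = v x)
    (w₁ w₂ : X → ℝ≥0∞) (hw₁ : Measurable w₁) (hw₂ : Measurable w₂)
    (hvw₁ : ∀ x, ENNReal.ofReal (max (v x) 0) ≤ w₁ x)
    (hvw₂ : ∀ x, ENNReal.ofReal (max (-v x) 0) ≤ w₂ x)
    (hdom₁ : DomPrinciple K w₁) (hdom₂ : DomPrinciple K w₂) :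
    ∀ x, ENNReal.ofReal |u x| ≤ w₁ x + w₂ x :=
  stmt_2_general K φ hφm hφ0 hsign u v hu hfin heq w₁ w₂ hvw₁ hvw₂ hdom₁ hdom₂
end

section
/- Let X be a measurable space and K a kernel on X. Let φ : X × ℝ → ℝ be Borel measurable with φ(x,0) = 0 for all x and sign-preserving, i.e. t·φ(x,t) ≥ 0 for all x ∈ X and t ∈ ℝ. Let u, v : X → ℝ be Borel with K|φ(·,u)| < ∞ pointwise and u + Kφ(·,u) = v. Suppose w′, w″ : X → [0,∞) are Borel functions with v = w′ − w″, and K satisfies the domination principle relative to w′ and relative to w″. Then −w″ ≤ u ≤ w′ on X. In particular, if w″ = 0 (i.e. v = w′ ≥ 0), then 0 ≤ u ≤ v. -/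
/-!
Write `f = φ(·,u)`, so that `Kf = v - u`. Where `f > 0` the sign condition gives `u ≥ 0`, hence
`Kf ≤ v ≤ w'` there; splitting `f = f⁺ - f⁻`, this is `Kf⁺ ≤ Kf⁻ + w'` on `{f⁺ > 0}`, and the
domination principle relative to `w'` spreads it to all of `X`, i.e. `u = v - Kf ≥ v - w' = -w''`.
The same argument applied to `-f` and `w''` gives `u ≤ w'`.
-/

open MeasureTheory ProbabilityTheory
open scoped ENNReal

lemma ENNReal.le_add_ofReal_iff_toReal_sub_le {a b : ℝ≥0∞} (ha : a ≠ ⊤) (hb : b ≠ ⊤) {c : ℝ}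
    (hc : 0 ≤ c) : a ≤ b + ENNReal.ofReal c ↔ a.toReal - b.toReal ≤ c := by
  have hbc : b + ENNReal.ofReal c = ENNReal.ofReal (b.toReal + c) := by
    rw [ENNReal.ofReal_add ENNReal.toReal_nonneg hc, ENNReal.ofReal_toReal hb]
  rw [hbc, ENNReal.le_ofReal_iff_toReal_le ha (by positivity), sub_le_iff_le_add']

lemma MeasureTheory.Integrable.lintegral_ofReal_ne_top {α : Type*} [MeasurableSpace α]
    {μ : Measure α} {f : α → ℝ} (hf : Integrable f μ) : ∫⁻ a, ENNReal.ofReal (f a) ∂μ ≠ ∞ :=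
  ne_top_of_le_ne_top ((hasFiniteIntegral_iff_norm f).mp hf.2).ne
    (lintegral_mono fun a => ENNReal.ofReal_le_ofReal (le_abs_self (f a)))

theorem DomPrinciple.integral_le {X : Type*} [MeasurableSpace X] {K : Kernel X X} {w : X → ℝ}
    (hdom : DomPrinciple K fun x => ENNReal.ofReal (w x)) (hw : ∀ x, 0 ≤ w x) {f : X → ℝ}
    (hf : Measurable f) (hfi : ∀ x, Integrable f (K x))
    (hpos : ∀ x, 0 < f x → ∫ y, f y ∂(K x) ≤ w x) (x : X) :
    ∫ y, f y ∂(K x) ≤ w x := by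
  have hsplit : ∀ x, ∫ y, f y ∂(K x) = (∫⁻ y, ENNReal.ofReal (f y) ∂(K x)).toReal
      - (∫⁻ y, ENNReal.ofReal (-f y) ∂(K x)).toReal := fun x =>
    integral_eq_lintegral_pos_part_sub_lintegral_neg_part (hfi x)
  have hiff : ∀ x, ∫⁻ y, ENNReal.ofReal (f y) ∂(K x)
        ≤ (∫⁻ y, ENNReal.ofReal (-f y) ∂(K x)) + ENNReal.ofReal (w x) ↔
      ∫ y, f y ∂(K x) ≤ w x := fun x => by
    rw [hsplit]
    exact ENNReal.le_add_ofReal_iff_toReal_sub_le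
      (hfi x).lintegral_ofReal_ne_top (hfi x).neg.lintegral_ofReal_ne_top (hw x)
  refine (hiff x).mp (hdom _ _ hf.ennreal_ofReal hf.neg.ennreal_ofReal (fun z hz => ?_) x)
  exact (hiff z).mpr (hpos z (ENNReal.ofReal_pos.mp hz))

theorem stmt_3_general {X : Type*} [MeasurableSpace X] (K : Kernel X X)
    (φ : X → ℝ → ℝ) (hφm : Measurable (Function.uncurry φ))
    (hsign : ∀ x t, 0 ≤ t * φ x t)
    (u v : X → ℝ) (hu : Measurable u)
    (hfin : ∀ x, ∫⁻ y, ENNReal.ofReal |φ y (u y)| ∂(K x) < ⊤)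
    (heq : ∀ x, u x + ∫ y, φ y (u y) ∂(K x) = v x)
    (w' w'' : X → ℝ)
    (hw'pos : ∀ x, 0 ≤ w' x) (hw''pos : ∀ x, 0 ≤ w'' x)
    (hdiff : ∀ x, v x = w' x - w'' x)
    (hdom' : DomPrinciple K fun x => ENNReal.ofReal (w' x))
    (hdom'' : DomPrinciple K fun x => ENNReal.ofReal (w'' x)) :
    (∀ x, -w'' x ≤ u x ∧ u x ≤ w' x) ∧
      ((∀ x, w'' x = 0) → ∀ x, 0 ≤ u x ∧ u x ≤ v x) := by
  set f : X → ℝ := fun y => φ y (u y)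
  have hf : Measurable f := hφm.comp (measurable_id.prodMk hu)
  have hfi : ∀ x, Integrable f (K x) := fun x =>
    ⟨hf.aestronglyMeasurable, (hasFiniteIntegral_iff_norm f).mpr (hfin x)⟩
  have hKf : ∀ x, ∫ y, f y ∂(K x) = v x - u x := fun x => by linarith [heq x]
  have upper : ∀ x, ∫ y, f y ∂(K x) ≤ w' x :=
    hdom'.integral_le hw'pos hf hfi fun z hz => by
      have := nonneg_of_mul_nonneg_left (hsign z (u z)) hz
      linarith [hKf z, hdiff z, hw''pos z]
  have lower : ∀ x, ∫ y, -f y ∂(K x) ≤ w'' x :=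
    hdom''.integral_le hw''pos hf.neg (fun x => (hfi x).neg) fun z hz => by
      have := nonpos_of_mul_nonneg_left (hsign z (u z)) (neg_pos.mp hz)
      linarith [integral_neg f (μ := K z), hKf z, hdiff z, hw'pos z]
  have bounds : ∀ x, -w'' x ≤ u x ∧ u x ≤ w' x := fun x => by
    have := integral_neg f (μ := K x)
    constructor <;> linarith [upper x, lower x, hKf x, hdiff x]
  exact ⟨bounds, fun hw'' x => by
    constructor <;> linarith [bounds x, hdiff x, hw'' x]⟩

theorem stmt_3 {X : Type*} [MeasurableSpace X] (K : Kernel X X)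
    (φ : X → ℝ → ℝ) (hφm : Measurable (Function.uncurry φ))
    (hφ0 : ∀ x, φ x 0 = 0) (hsign : ∀ x t, 0 ≤ t * φ x t)
    (u v : X → ℝ) (hu : Measurable u) (hv : Measurable v)
    (hfin : ∀ x, ∫⁻ y, ENNReal.ofReal |φ y (u y)| ∂(K x) < ⊤)
    (heq : ∀ x, u x + ∫ y, φ y (u y) ∂(K x) = v x)
    (w' w'' : X → ℝ) (hw' : Measurable w') (hw'' : Measurable w'')
    (hw'pos : ∀ x, 0 ≤ w' x) (hw''pos : ∀ x, 0 ≤ w'' x)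
    (hdiff : ∀ x, v x = w' x - w'' x)
    (hdom' : DomPrinciple K fun x => ENNReal.ofReal (w' x))
    (hdom'' : DomPrinciple K fun x => ENNReal.ofReal (w'' x)) :
    (∀ x, -w'' x ≤ u x ∧ u x ≤ w' x) ∧
      ((∀ x, w'' x = 0) → ∀ x, 0 ≤ u x ∧ u x ≤ v x) :=
  stmt_3_general K φ hφm hsign u v hu hfin heq w' w'' hw'pos hw''pos hdiff hdom' hdom''
end

section
/- Let X be a measurable space and K a kernel on X satisfying the domination principle relative to the zero function, i.e., for all Borel g, h : X → [0,∞], if Kg ≤ Kh at every point of {g > 0}, then Kg ≤ Kh everywhere on X. Let φ : X × ℝ → ℝ be Borel measurable with φ(x,0) = 0 and such that t ↦ φ(x,t) is increasing for every x ∈ X. If u₁, u₂ : X → ℝ are Borel with K|φ(·,u₁)| < ∞ and K|φ(·,u₂)| < ∞ pointwise, and u₁ + Kφ(·,u₁) = u₂ + Kφ(·,u₂), then u₁ = u₂. -/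
/-!
Put `d := φ(·,u₁) - φ(·,u₂)`; the equation says `Kd = u₂ - u₁`. Where `d > 0`, monotonicity
of `φ` forces `u₁ > u₂`, so `Kd⁺ ≤ Kd⁻` on `{d⁺ > 0}`. The domination principle spreads this
inequality to all of `X`, whence `Kd ≤ 0`, i.e. `u₂ ≤ u₁`; by symmetry `u₁ = u₂`.
-/

open MeasureTheory ProbabilityTheory
open scoped ENNReal

lemma integrable_of_lintegral_ofReal_abs_lt_top {α : Type*} [MeasurableSpace α] {μ : Measure α}
    {f : α → ℝ} (hf : Measurable f) (hfin : ∫⁻ y, ENNReal.ofReal |f y| ∂μ < ⊤) :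
    Integrable f μ :=
  ⟨hf.aestronglyMeasurable, (hasFiniteIntegral_iff_norm f).2 hfin⟩

lemma integral_nonpos_iff_lintegral_ofReal_le {α : Type*} [MeasurableSpace α] {μ : Measure α}
    {f : α → ℝ} (hf : Integrable f μ) :
    ∫ y, f y ∂μ ≤ 0 ↔ ∫⁻ y, ENNReal.ofReal (f y) ∂μ ≤ ∫⁻ y, ENNReal.ofReal (-f y) ∂μ := by
  have hneg : ∫⁻ y, ENNReal.ofReal (-f y) ∂μ < ⊤ := hf.neg.lintegral_lt_top
  rw [integral_eq_lintegral_pos_part_sub_lintegral_neg_part hf, sub_nonpos,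
    ENNReal.toReal_le_toReal hf.lintegral_lt_top.ne hneg.ne]

namespace ProbabilityTheory.Kernel

variable {X : Type*} [MeasurableSpace X]

def DominationPrinciple (K : Kernel X X) : Prop :=
  ∀ g h : X → ℝ≥0∞, Measurable g → Measurable h →
    (∀ x, 0 < g x → ∫⁻ y, g y ∂(K x) ≤ ∫⁻ y, h y ∂(K x)) →
    ∀ x, ∫⁻ y, g y ∂(K x) ≤ ∫⁻ y, h y ∂(K x)

lemma DominationPrinciple.integral_nonpos {K : Kernel X X}
    (hK : DominationPrinciple K) {d : X → ℝ} (hd : Measurable d)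
    (hint : ∀ x, Integrable d (K x)) (hpos : ∀ x, 0 < d x → ∫ y, d y ∂(K x) ≤ 0) (x : X) :
    ∫ y, d y ∂(K x) ≤ 0 := by
  refine (integral_nonpos_iff_lintegral_ofReal_le (hint x)).2 <|
    hK _ _ hd.ennreal_ofReal hd.neg.ennreal_ofReal (fun z hz => ?_) x
  exact (integral_nonpos_iff_lintegral_ofReal_le (hint z)).1 (hpos z (ENNReal.ofReal_pos.1 hz))

lemma DominationPrinciple.le_of_add_integral_eq {K : Kernel X X} (hK : DominationPrinciple K)
    {φ : X → ℝ → ℝ} (hφm : Measurable (Function.uncurry φ)) (hφmono : ∀ x, Monotone (φ x))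
    {u₁ u₂ : X → ℝ} (hu₁ : Measurable u₁) (hu₂ : Measurable u₂)
    (hfin₁ : ∀ x, ∫⁻ y, ENNReal.ofReal |φ y (u₁ y)| ∂(K x) < ⊤)
    (hfin₂ : ∀ x, ∫⁻ y, ENNReal.ofReal |φ y (u₂ y)| ∂(K x) < ⊤)
    (heq : ∀ x, u₁ x + ∫ y, φ y (u₁ y) ∂(K x) = u₂ x + ∫ y, φ y (u₂ y) ∂(K x)) (x : X) :
    u₂ x ≤ u₁ x := by
  have hm₁ : Measurable fun y => φ y (u₁ y) := hφm.comp (measurable_id.prodMk hu₁)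
  have hm₂ : Measurable fun y => φ y (u₂ y) := hφm.comp (measurable_id.prodMk hu₂)
  have hint₁ x := integrable_of_lintegral_ofReal_abs_lt_top hm₁ (hfin₁ x)
  have hint₂ x := integrable_of_lintegral_ofReal_abs_lt_top hm₂ (hfin₂ x)
  have hKd : ∀ x, ∫ y, φ y (u₁ y) - φ y (u₂ y) ∂(K x) = u₂ x - u₁ x := fun x => by
    rw [integral_sub (hint₁ x) (hint₂ x)]
    linarith [heq x]
  have hpos : ∀ x, 0 < φ x (u₁ x) - φ x (u₂ x) → ∫ y, φ y (u₁ y) - φ y (u₂ y) ∂(K x) ≤ 0 := by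
    intro x hx
    rw [hKd, sub_nonpos]
    by_contra! hlt
    linarith [hφmono x hlt.le]
  have := hK.integral_nonpos (d := fun y => φ y (u₁ y) - φ y (u₂ y)) (hm₁.sub hm₂)
    (fun x => (hint₁ x).sub (hint₂ x)) hpos x
  linarith [hKd x]

end ProbabilityTheory.Kernel

theorem stmt_5_general {X : Type*} [MeasurableSpace X] (K : Kernel X X)
    (hdom : ∀ g h : X → ℝ≥0∞, Measurable g → Measurable h →
      (∀ x, 0 < g x → ∫⁻ y, g y ∂(K x) ≤ ∫⁻ y, h y ∂(K x)) →
      ∀ x, ∫⁻ y, g y ∂(K x) ≤ ∫⁻ y, h y ∂(K x))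
    (φ : X → ℝ → ℝ) (hφm : Measurable (Function.uncurry φ))
    (hφmono : ∀ x, Monotone (φ x))
    (u₁ u₂ : X → ℝ) (hu₁ : Measurable u₁) (hu₂ : Measurable u₂)
    (hfin₁ : ∀ x, ∫⁻ y, ENNReal.ofReal |φ y (u₁ y)| ∂(K x) < ⊤)
    (hfin₂ : ∀ x, ∫⁻ y, ENNReal.ofReal |φ y (u₂ y)| ∂(K x) < ⊤)
    (heq : ∀ x, u₁ x + ∫ y, φ y (u₁ y) ∂(K x) = u₂ x + ∫ y, φ y (u₂ y) ∂(K x)) :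
    u₁ = u₂ := by
  have hK : K.DominationPrinciple := hdom
  funext x
  exact le_antisymm
    (hK.le_of_add_integral_eq hφm hφmono hu₂ hu₁ hfin₂ hfin₁ (fun x => (heq x).symm) x)
    (hK.le_of_add_integral_eq hφm hφmono hu₁ hu₂ hfin₁ hfin₂ heq x)

theorem stmt_5 {X : Type*} [MeasurableSpace X] (K : Kernel X X)
    (hdom : ∀ g h : X → ℝ≥0∞, Measurable g → Measurable h →
      (∀ x, 0 < g x → ∫⁻ y, g y ∂(K x) ≤ ∫⁻ y, h y ∂(K x)) →
      ∀ x, ∫⁻ y, g y ∂(K x) ≤ ∫⁻ y, h y ∂(K x))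
    (φ : X → ℝ → ℝ) (hφm : Measurable (Function.uncurry φ))
    (hφ0 : ∀ x, φ x 0 = 0) (hφmono : ∀ x, Monotone (φ x))
    (u₁ u₂ : X → ℝ) (hu₁ : Measurable u₁) (hu₂ : Measurable u₂)
    (hfin₁ : ∀ x, ∫⁻ y, ENNReal.ofReal |φ y (u₁ y)| ∂(K x) < ⊤)
    (hfin₂ : ∀ x, ∫⁻ y, ENNReal.ofReal |φ y (u₂ y)| ∂(K x) < ⊤)
    (heq : ∀ x, u₁ x + ∫ y, φ y (u₁ y) ∂(K x) = u₂ x + ∫ y, φ y (u₂ y) ∂(K x)) :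
    u₁ = u₂ :=
  stmt_5_general K hdom φ hφm hφmono u₁ u₂ hu₁ hu₂ hfin₁ hfin₂ heq
end

section
/- Let X be a measurable space and K a kernel on X satisfying the domination principle relative to the zero function, i.e., for all Borel g, h : X → [0,∞], if Kg ≤ Kh at every point of {g > 0}, then Kg ≤ Kh everywhere on X. Let φ, φ̃ : X × ℝ → ℝ be Borel measurable with φ̃ ≤ φ pointwise, φ(x,0) = 0, and t ↦ φ(x,t) increasing for every x ∈ X. Suppose u, ũ : X → ℝ are Borel with K(|φ(·,u)| + |φ̃(·,ũ)|) < ∞ pointwise and u + Kφ(·,u) = ũ + Kφ̃(·,ũ). Then u ≤ ũ on X. -/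
/-!
Write `f := φ(·,u) - φ'(·,u')`, so that the equation says `Kf = u' - u`. Where `f < 0` we have
`φ(·,u) < φ'(·,u') ≤ φ(·,u')`, hence `u < u'` by monotonicity, i.e. `Kf ≥ 0` there. Applied to the
negative and positive parts of `f`, the domination principle spreads `Kf ≥ 0` from `{f < 0}` to
all of `X`.
-/

open MeasureTheory ProbabilityTheory
open scoped ENNReal

lemma integral_nonneg_iff_lintegral_negPart_le {α : Type*} [MeasurableSpace α] {μ : Measure α}
    {f : α → ℝ} (hf : Integrable f μ) :
    0 ≤ ∫ y, f y ∂μ ↔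
      ∫⁻ y, ENNReal.ofReal (-f y) ∂μ ≤ ∫⁻ y, ENNReal.ofReal (f y) ∂μ := by
  rw [integral_eq_lintegral_pos_part_sub_lintegral_neg_part hf, sub_nonneg]
  exact ENNReal.toReal_le_toReal hf.neg.lintegral_lt_top.ne hf.lintegral_lt_top.ne

namespace ProbabilityTheory.Kernel

variable {X : Type*} [MeasurableSpace X]

/-- The domination principle relative to the zero function. -/
def SatisfiesDominationPrinciple (K : Kernel X X) : Prop :=
  ∀ g h : X → ℝ≥0∞, Measurable g → Measurable h →
    (∀ x, 0 < g x → ∫⁻ y, g y ∂(K x) ≤ ∫⁻ y, h y ∂(K x)) →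
    ∀ x, ∫⁻ y, g y ∂(K x) ≤ ∫⁻ y, h y ∂(K x)

theorem SatisfiesDominationPrinciple.integral_nonneg {K : Kernel X X}
    (hK : K.SatisfiesDominationPrinciple) {f : X → ℝ} (hf : Measurable f)
    (hint : ∀ x, Integrable f (K x)) (hneg : ∀ x, f x < 0 → 0 ≤ ∫ y, f y ∂(K x)) (x : X) :
    0 ≤ ∫ y, f y ∂(K x) := by
  rw [integral_nonneg_iff_lintegral_negPart_le (hint x)]
  refine hK (fun y ↦ ENNReal.ofReal (-f y)) _ hf.neg.ennreal_ofReal hf.ennreal_ofReal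
    (fun z hz ↦ ?_) x
  rw [← integral_nonneg_iff_lintegral_negPart_le (hint z)]
  exact hneg z (by simpa using hz)

end ProbabilityTheory.Kernel

theorem stmt_6_general {X : Type*} [MeasurableSpace X] (K : Kernel X X)
    (hdom : ∀ g h : X → ℝ≥0∞, Measurable g → Measurable h →
      (∀ x, 0 < g x → ∫⁻ y, g y ∂(K x) ≤ ∫⁻ y, h y ∂(K x)) →
      ∀ x, ∫⁻ y, g y ∂(K x) ≤ ∫⁻ y, h y ∂(K x))
    (φ φ' : X → ℝ → ℝ)
    (hφm : Measurable (Function.uncurry φ)) (hφ'm : Measurable (Function.uncurry φ'))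
    (hle : ∀ x t, φ' x t ≤ φ x t)
    (hφmono : ∀ x, Monotone (φ x))
    (u u' : X → ℝ) (hu : Measurable u) (hu' : Measurable u')
    (hfin : ∀ x, ∫⁻ y, ENNReal.ofReal (|φ y (u y)| + |φ' y (u' y)|) ∂(K x) < ⊤)
    (heq : ∀ x, u x + ∫ y, φ y (u y) ∂(K x) = u' x + ∫ y, φ' y (u' y) ∂(K x)) :
    ∀ x, u x ≤ u' x := by
  have hφu : Measurable fun y ↦ φ y (u y) := hφm.comp (measurable_id.prodMk hu)
  have hφ'u' : Measurable fun y ↦ φ' y (u' y) := hφ'm.comp (measurable_id.prodMk hu')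
  have hdomint : ∀ x, Integrable (fun y ↦ |φ y (u y)| + |φ' y (u' y)|) (K x) := fun x ↦
    (lintegral_ofReal_ne_top_iff_integrable (hφu.abs.add hφ'u'.abs).aestronglyMeasurable
      (.of_forall fun _ ↦ add_nonneg (abs_nonneg _) (abs_nonneg _))).1 (hfin x).ne
  have hint : ∀ x, Integrable (fun y ↦ φ y (u y)) (K x) := fun x ↦
    (hdomint x).mono' hφu.aestronglyMeasurable (.of_forall fun _ ↦ by simp)
  have hint' : ∀ x, Integrable (fun y ↦ φ' y (u' y)) (K x) := fun x ↦
    (hdomint x).mono' hφ'u'.aestronglyMeasurable (.of_forall fun _ ↦ by simp)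
  have hKf : ∀ x, ∫ y, φ y (u y) - φ' y (u' y) ∂(K x) = u' x - u x := fun x ↦ by
    rw [integral_sub (hint x) (hint' x)]
    linarith [heq x]
  have hneg : ∀ x, φ x (u x) - φ' x (u' x) < 0 → 0 ≤ ∫ y, φ y (u y) - φ' y (u' y) ∂(K x) := by
    intro x hx
    rw [hKf, sub_nonneg]
    exact ((hφmono x).reflect_lt (by linarith [hle x (u' x)])).le
  intro x
  have hKf_nonneg := Kernel.SatisfiesDominationPrinciple.integral_nonneg hdom
    (f := fun y ↦ φ y (u y) - φ' y (u' y)) (hφu.sub hφ'u') (fun x ↦ (hint x).sub (hint' x)) hneg x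
  linarith [hKf x]

theorem stmt_6 {X : Type*} [MeasurableSpace X] (K : Kernel X X)
    (hdom : ∀ g h : X → ℝ≥0∞, Measurable g → Measurable h →
      (∀ x, 0 < g x → ∫⁻ y, g y ∂(K x) ≤ ∫⁻ y, h y ∂(K x)) →
      ∀ x, ∫⁻ y, g y ∂(K x) ≤ ∫⁻ y, h y ∂(K x))
    (φ φ' : X → ℝ → ℝ)
    (hφm : Measurable (Function.uncurry φ)) (hφ'm : Measurable (Function.uncurry φ'))
    (hle : ∀ x t, φ' x t ≤ φ x t)
    (hφ0 : ∀ x, φ x 0 = 0) (hφmono : ∀ x, Monotone (φ x))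
    (u u' : X → ℝ) (hu : Measurable u) (hu' : Measurable u')
    (hfin : ∀ x, ∫⁻ y, ENNReal.ofReal (|φ y (u y)| + |φ' y (u' y)|) ∂(K x) < ⊤)
    (heq : ∀ x, u x + ∫ y, φ y (u y) ∂(K x) = u' x + ∫ y, φ' y (u' y) ∂(K x)) :
    ∀ x, u x ≤ u' x :=
  stmt_6_general K hdom φ φ' hφm hφ'm hle hφmono u u' hu hu' hfin heq
end

section
/- Let X be a measurable space, c > 0, and K a kernel on X such that K(x,X) < ∞ for every x ∈ X and with the following compactness property: every sequence (g_n) of Borel functions on X with |g_n| ≤ c admits a subsequence along which (Kg_n) converges uniformly on X. Let φ : X × ℝ → ℝ be Borel measurable with |φ| ≤ c and t ↦ φ(x,t) continuous for every x ∈ X. If (u_n) is a sequence of Borel real functions on X converging pointwise to a Borel real function u, then the functions Kφ(·,u_n) converge to Kφ(·,u) uniformly on X. -/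
/-!
By dominated convergence, `Kφ(·,uₙ) → Kφ(·,u)` pointwise. The compactness of `K` gives every
subsequence a further subsequence converging uniformly, necessarily to the pointwise limit; in the
topology of uniform convergence this subsequence principle yields convergence of the whole sequence.
-/

open MeasureTheory ProbabilityTheory Filter
open scoped Topology

theorem tendstoUniformly_of_subseq_tendstoUniformly {α β : Type*} [UniformSpace β] [T2Space β]
    {f : ℕ → α → β} {g : α → β} (hpt : ∀ x, Tendsto (fun n => f n x) atTop (𝓝 (g x)))
    (hsub : ∀ σ : ℕ → ℕ, Tendsto σ atTop atTop → ∃ τ : ℕ → ℕ, StrictMono τ ∧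
      ∃ F : α → β, TendstoUniformly (fun k => f (σ (τ k))) F atTop) :
    TendstoUniformly f g atTop := by
  refine (UniformFun.tendsto_iff_tendstoUniformly (F := fun n => UniformFun.ofFun (f n))
    (f := UniformFun.ofFun g)).mp (tendsto_of_subseq_tendsto fun σ hσ => ?_)
  obtain ⟨τ, hτ, F, hF⟩ := hsub σ hσ
  have hFg : F = g := funext fun x =>
    tendsto_nhds_unique (hF.tendsto_at x) ((hpt x).comp (hσ.comp hτ.tendsto_atTop))
  subst hFg
  exact ⟨τ, UniformFun.tendsto_iff_tendstoUniformly.mpr hF⟩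

theorem tendsto_integral_comp_of_tendsto {X : Type*} [MeasurableSpace X] {μ : Measure X}
    [IsFiniteMeasure μ] {φ : X → ℝ → ℝ} (hφm : Measurable (Function.uncurry φ)) {c : ℝ}
    (hφb : ∀ x t, |φ x t| ≤ c) (hφc : ∀ x, Continuous (φ x)) {u : ℕ → X → ℝ}
    (hum : ∀ n, Measurable (u n)) {v : X → ℝ}
    (hconv : ∀ x, Tendsto (fun n => u n x) atTop (𝓝 (v x))) :
    Tendsto (fun n => ∫ y, φ y (u n y) ∂μ) atTop (𝓝 (∫ y, φ y (v y) ∂μ)) :=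
  tendsto_integral_of_dominated_convergence (fun _ => c)
    (fun n => (hφm.comp (measurable_id.prodMk (hum n))).aestronglyMeasurable)
    (integrable_const c) (fun n => .of_forall fun y => hφb y (u n y))
    (.of_forall fun y => ((hφc y).tendsto _).comp (hconv y))

theorem stmt_7_general {X : Type*} [MeasurableSpace X] (c : ℝ) (K : Kernel X X)
    (hKfin : ∀ x, K x Set.univ < ⊤)
    (hcomp : ∀ g : ℕ → X → ℝ, (∀ n, Measurable (g n)) → (∀ n x, |g n x| ≤ c) →
      ∃ σ : ℕ → ℕ, StrictMono σ ∧ ∃ F : X → ℝ,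
        TendstoUniformly (fun k x => ∫ y, g (σ k) y ∂(K x)) F atTop)
    (φ : X → ℝ → ℝ) (hφm : Measurable (Function.uncurry φ))
    (hφb : ∀ x t, |φ x t| ≤ c) (hφc : ∀ x, Continuous (φ x))
    (u : ℕ → X → ℝ) (hum : ∀ n, Measurable (u n))
    (ulim : X → ℝ)
    (hconv : ∀ x, Tendsto (fun n => u n x) atTop (nhds (ulim x))) :
    TendstoUniformly (fun n x => ∫ y, φ y (u n y) ∂(K x))
      (fun x => ∫ y, φ y (ulim y) ∂(K x)) atTop := by
  refine tendstoUniformly_of_subseq_tendstoUniformly (fun x => ?_) (fun σ _ => ?_)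
  · have : IsFiniteMeasure (K x) := ⟨hKfin x⟩
    exact tendsto_integral_comp_of_tendsto hφm hφb hφc hum hconv
  · exact hcomp (fun k y => φ y (u (σ k) y))
      (fun k => hφm.comp (measurable_id.prodMk (hum (σ k)))) (fun k y => hφb y (u (σ k) y))

theorem stmt_7 {X : Type*} [MeasurableSpace X] (c : ℝ) (hc : 0 < c) (K : Kernel X X)
    (hKfin : ∀ x, K x Set.univ < ⊤)
    (hcomp : ∀ g : ℕ → X → ℝ, (∀ n, Measurable (g n)) → (∀ n x, |g n x| ≤ c) →
      ∃ σ : ℕ → ℕ, StrictMono σ ∧ ∃ F : X → ℝ,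
        TendstoUniformly (fun k x => ∫ y, g (σ k) y ∂(K x)) F atTop)
    (φ : X → ℝ → ℝ) (hφm : Measurable (Function.uncurry φ))
    (hφb : ∀ x t, |φ x t| ≤ c) (hφc : ∀ x, Continuous (φ x))
    (u : ℕ → X → ℝ) (hum : ∀ n, Measurable (u n))
    (ulim : X → ℝ) (hulm : Measurable ulim)
    (hconv : ∀ x, Tendsto (fun n => u n x) atTop (nhds (ulim x))) :
    TendstoUniformly (fun n x => ∫ y, φ y (u n y) ∂(K x))
      (fun x => ∫ y, φ y (ulim y) ∂(K x)) atTop :=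
  stmt_7_general c K hKfin hcomp φ hφm hφb hφc u hum ulim hconv
end

section
/- Let X be a locally compact Hausdorff space with countable base of open sets, and let P be a sub-Markov kernel on X (that is, P(x,X) ≤ 1 for all x) which is strong Feller, i.e., Pf is continuous for every bounded Borel function f on X. Let x ∈ X be such that P(x,·) ≠ δ_x. Then there exist η ∈ (0,1) and an open set V with compact closure such that x ∈ V and P(z,V) ≤ η for every z ∈ V. -/
/-!
Since `P(x, ·)` has mass at most one and is not `δ_x`, it gives the point `x` mass `< 1`; by outer
regularity some open `W ∋ x`, which may be taken relatively compact, has `P(x, W) = c < 1`. The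
strong Feller property makes `z ↦ P(z, W)` continuous, so for `c < η < 1` the set
`V = W ∩ {z | P(z, W) < η}` is an open neighbourhood of `x` with `P(z, V) ≤ P(z, W) < η` on `V`.
-/

open MeasureTheory ProbabilityTheory
open scoped ENNReal

namespace MeasureTheory.Measure

variable {α : Type*} [MeasurableSpace α] [MeasurableSingletonClass α]

lemma eq_dirac_of_measure_univ_le_measure_singleton {μ : Measure α} {x : α}
    (hμ : μ Set.univ ≤ 1) (hx : 1 ≤ μ {x}) : μ = dirac x := by
  have hx₁ : μ {x} = 1 := le_antisymm ((measure_mono (Set.subset_univ _)).trans hμ) hx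
  have hcompl : μ {x}ᶜ = 0 := by
    rw [measure_compl (measurableSet_singleton x) (by simp [hx₁]), hx₁]
    exact tsub_eq_zero_of_le hμ
  calc μ = μ.restrict {x} := (restrict_eq_self_of_ae_mem (mem_ae_iff.mpr hcompl)).symm
    _ = dirac x := by rw [restrict_singleton, hx₁, one_smul]

lemma measure_singleton_lt_one_of_ne_dirac {μ : Measure α} {x : α}
    (hμ : μ Set.univ ≤ 1) (hx : μ ≠ dirac x) : μ {x} < 1 :=
  lt_of_not_ge fun h => hx (eq_dirac_of_measure_univ_le_measure_singleton hμ h)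

end MeasureTheory.Measure

lemma ProbabilityTheory.Kernel.continuous_measureReal_of_strongFeller {X Y : Type*}
    [TopologicalSpace X] [MeasurableSpace X] [MeasurableSpace Y] {P : Kernel X Y}
    (hFeller : ∀ f : Y → ℝ, Measurable f → (∃ C, ∀ y, |f y| ≤ C) →
      Continuous fun z => ∫ y, f y ∂(P z))
    {s : Set Y} (hs : MeasurableSet s) : Continuous fun z => (P z).real s := by
  have hbdd : ∃ C, ∀ y, |s.indicator (1 : Y → ℝ) y| ≤ C :=
    ⟨1, fun y => by by_cases hy : y ∈ s <;> simp [hy]⟩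
  simpa only [integral_indicator_one hs] using
    hFeller _ (measurable_one.indicator hs) hbdd

theorem stmt_10 {X : Type*} [TopologicalSpace X] [LocallyCompactSpace X] [T2Space X]
    [SecondCountableTopology X] [MeasurableSpace X] [BorelSpace X]
    (P : Kernel X X) (hsub : ∀ z, P z Set.univ ≤ 1)
    (hFeller : ∀ f : X → ℝ, Measurable f → (∃ C, ∀ z, |f z| ≤ C) →
      Continuous fun z => ∫ y, f y ∂(P z))
    (x : X) (hx : P x ≠ Measure.dirac x) :
    ∃ η ∈ Set.Ioo (0 : ℝ) 1, ∃ V : Set X, IsOpen V ∧ IsCompact (closure V) ∧ x ∈ V ∧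
      ∀ z ∈ V, P z V ≤ ENNReal.ofReal η := by
  have hfin (z : X) : IsFiniteMeasure (P z) := ⟨(hsub z).trans_lt ENNReal.one_lt_top⟩
  obtain ⟨W₀, hxW₀, hW₀, hW₀lt⟩ := Set.exists_isOpen_lt_of_lt _ _
    (Measure.measure_singleton_lt_one_of_ne_dirac (hsub x) hx)
  obtain ⟨U, hU, hxU, hUc⟩ := exists_isOpen_mem_isCompact_closure x
  set W := W₀ ∩ U
  have hW : IsOpen W := hW₀.inter hU
  have hxW : x ∈ W := ⟨hxW₀ rfl, hxU⟩
  have hg := P.continuous_measureReal_of_strongFeller hFeller hW.measurableSet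
  set c := (P x).real W
  have hc1 : c < 1 := ENNReal.toReal_lt_of_lt_ofReal <| by
    simpa using (measure_mono Set.inter_subset_left).trans_lt hW₀lt
  obtain ⟨η, hcη, hη1⟩ := exists_between hc1
  refine ⟨η, ⟨measureReal_nonneg.trans_lt hcη, hη1⟩, W ∩ (fun z => (P z).real W) ⁻¹' Set.Iio η,
    hW.inter (isOpen_Iio.preimage hg), ?_, ⟨hxW, hcη⟩, fun z hz => ?_⟩
  · exact hUc.of_isClosed_subset isClosed_closure
      (closure_mono (Set.inter_subset_left.trans Set.inter_subset_right))
  · exact (measure_mono Set.inter_subset_left).trans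
      ((ENNReal.lt_ofReal_iff_toReal_lt (measure_ne_top _ _)).mpr hz.2).le
end

section
/- Let X be a locally compact Hausdorff space with countable base and λ > 0. Let u, v : X → ℝ be continuous with 0 < u ≤ 1 and v ≥ 1 on X, and suppose the function x ↦ u(x)/v(x) vanishes at infinity on X. Then the function f : X × ℝ → ℝ defined by f(x,s) := min(u(x)·e^{λs}, 1) / (1 + v(x)·e^{λs}) is continuous and vanishes at infinity on X × ℝ; in particular f(x,s) ≤ min(u(x)/v(x), e^{−λ|s|}) for all (x,s). -/
open Filter Topology

/-!
Put `t = exp (λ s)`. The numerator `min (u t) 1` is at most `u t` and at most `1`, while the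
denominator `1 + v t` exceeds both `v t` and `max 1 t`; hence `f (x, s) ≤ u x / v x` and
`f (x, s) ≤ min t t⁻¹ = exp (-λ|s|)`. The first bound is small off `K × ℝ` and the second off
`X × [-R, R]`, and the complements of such sets generate the cocompact filter of `X × ℝ`.
-/

section Profile

variable {u v t : ℝ}

lemma min_mul_one_div_one_add_mul_nonneg (hu : 0 ≤ u) (hv : 0 ≤ v) (ht : 0 ≤ t) :
    0 ≤ min (u * t) 1 / (1 + v * t) :=
  div_nonneg (le_min (mul_nonneg hu ht) zero_le_one) (by positivity)

lemma min_mul_one_div_one_add_mul_le_div (hu : 0 ≤ u) (hv : 0 < v) (ht : 0 < t) :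
    min (u * t) 1 / (1 + v * t) ≤ u / v :=
  calc min (u * t) 1 / (1 + v * t) ≤ u * t / (v * t) :=
        div_le_div₀ (by positivity) (min_le_left _ _) (by positivity) (by linarith)
    _ = u / v := mul_div_mul_right _ _ ht.ne'

lemma min_mul_one_div_one_add_mul_le_self (hu : 0 ≤ u) (hu1 : u ≤ 1) (hv : 0 ≤ v) (ht : 0 ≤ t) :
    min (u * t) 1 / (1 + v * t) ≤ t :=
  calc min (u * t) 1 / (1 + v * t) ≤ min (u * t) 1 :=
        div_le_self (le_min (mul_nonneg hu ht) zero_le_one) (by nlinarith)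
    _ ≤ u * t := min_le_left _ _
    _ ≤ t := mul_le_of_le_one_left ht hu1

lemma min_mul_one_div_one_add_mul_le_inv (hv : 1 ≤ v) (ht : 0 < t) :
    min (u * t) 1 / (1 + v * t) ≤ t⁻¹ :=
  calc min (u * t) 1 / (1 + v * t) ≤ 1 / (1 + v * t) :=
        div_le_div_of_nonneg_right (min_le_right _ _) (by nlinarith)
    _ ≤ 1 / t := one_div_le_one_div_of_le ht (by nlinarith)
    _ = t⁻¹ := one_div t

end Profile

lemma Real.exp_neg_mul_abs {lam : ℝ} (hlam : 0 ≤ lam) (s : ℝ) :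
    Real.exp (-(lam * |s|)) = min (Real.exp (lam * s)) (Real.exp (lam * s))⁻¹ := by
  rw [show lam * |s| = |lam * s| by rw [abs_mul, abs_of_nonneg hlam], abs_eq_max_neg, ← min_neg_neg, neg_neg, min_comm,
    Real.exp_monotone.map_min, Real.exp_neg]

lemma Real.tendsto_exp_neg_mul_abs_cocompact {lam : ℝ} (hlam : 0 < lam) :
    Tendsto (fun s : ℝ => Real.exp (-(lam * |s|))) (cocompact ℝ) (𝓝 0) := by
  have habs : Tendsto (fun s : ℝ => |s|) (cocompact ℝ) atTop := by
    exact tendsto_norm_cocompact_atTop.congr Real.norm_eq_abs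
  exact Real.tendsto_exp_atBot.comp (tendsto_neg_atTop_atBot.comp (habs.const_mul_atTop hlam))

lemma tendsto_zero_cocompact_prod_of_le {X Y : Type*} [TopologicalSpace X] [TopologicalSpace Y]
    {f : X × Y → ℝ} {g : X → ℝ} {h : Y → ℝ} (hg : Tendsto g (cocompact X) (𝓝 0))
    (hh : Tendsto h (cocompact Y) (𝓝 0)) (hf0 : ∀ p, 0 ≤ f p) (hfg : ∀ p, f p ≤ g p.1)
    (hfh : ∀ p, f p ≤ h p.2) : Tendsto f (cocompact (X × Y)) (𝓝 0) := by
  rw [← coprod_cocompact, Filter.coprod, tendsto_sup]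
  exact ⟨squeeze_zero hf0 hfg (hg.comp tendsto_comap), squeeze_zero hf0 hfh (hh.comp tendsto_comap)⟩

theorem stmt_12_general {X : Type*} [TopologicalSpace X]
    (lam : ℝ) (hlam : 0 < lam) (u v : X → ℝ) (hu : Continuous u) (hv : Continuous v)
    (hu0 : ∀ x, 0 < u x) (hu1 : ∀ x, u x ≤ 1) (hv1 : ∀ x, 1 ≤ v x)
    (huv : Tendsto (fun x => u x / v x) (cocompact X) (nhds 0)) :
    Continuous (fun p : X × ℝ =>
      min (u p.1 * Real.exp (lam * p.2)) 1 / (1 + v p.1 * Real.exp (lam * p.2))) ∧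
    Tendsto (fun p : X × ℝ =>
        min (u p.1 * Real.exp (lam * p.2)) 1 / (1 + v p.1 * Real.exp (lam * p.2)))
      (cocompact (X × ℝ)) (nhds 0) ∧
    ∀ (x : X) (s : ℝ),
      min (u x * Real.exp (lam * s)) 1 / (1 + v x * Real.exp (lam * s)) ≤
        min (u x / v x) (Real.exp (-(lam * |s|))) := by
  have hv0 : ∀ x, 0 < v x := fun x => zero_lt_one.trans_le (hv1 x)
  have hbound : ∀ (x : X) (s : ℝ),
      min (u x * Real.exp (lam * s)) 1 / (1 + v x * Real.exp (lam * s)) ≤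
        min (u x / v x) (Real.exp (-(lam * |s|))) := fun x s => by
    rw [Real.exp_neg_mul_abs hlam.le]
    exact le_min (min_mul_one_div_one_add_mul_le_div (hu0 x).le (hv0 x) (Real.exp_pos _))
      (le_min (min_mul_one_div_one_add_mul_le_self (hu0 x).le (hu1 x) (hv0 x).le
        (Real.exp_pos _).le) (min_mul_one_div_one_add_mul_le_inv (hv1 x) (Real.exp_pos _)))
  refine ⟨?_, ?_, hbound⟩
  · refine Continuous.div (by fun_prop) (by fun_prop) fun p => ?_
    exact (add_pos_of_pos_of_nonneg one_pos (mul_pos (hv0 p.1) (Real.exp_pos _)).le).ne'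
  · exact tendsto_zero_cocompact_prod_of_le huv (Real.tendsto_exp_neg_mul_abs_cocompact hlam)
      (fun p => min_mul_one_div_one_add_mul_nonneg (hu0 p.1).le (hv0 p.1).le (Real.exp_pos _).le)
      (fun p => (hbound p.1 p.2).trans (min_le_left _ _))
      (fun p => (hbound p.1 p.2).trans (min_le_right _ _))

theorem stmt_12 {X : Type*} [TopologicalSpace X] [LocallyCompactSpace X] [T2Space X]
    [SecondCountableTopology X]
    (lam : ℝ) (hlam : 0 < lam) (u v : X → ℝ) (hu : Continuous u) (hv : Continuous v)
    (hu0 : ∀ x, 0 < u x) (hu1 : ∀ x, u x ≤ 1) (hv1 : ∀ x, 1 ≤ v x)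
    (huv : Tendsto (fun x => u x / v x) (cocompact X) (nhds 0)) :
    Continuous (fun p : X × ℝ =>
      min (u p.1 * Real.exp (lam * p.2)) 1 / (1 + v p.1 * Real.exp (lam * p.2))) ∧
    Tendsto (fun p : X × ℝ =>
        min (u p.1 * Real.exp (lam * p.2)) 1 / (1 + v p.1 * Real.exp (lam * p.2)))
      (cocompact (X × ℝ)) (nhds 0) ∧
    ∀ (x : X) (s : ℝ),
      min (u x * Real.exp (lam * s)) 1 / (1 + v x * Real.exp (lam * s)) ≤
        min (u x / v x) (Real.exp (-(lam * |s|))) :=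
  stmt_12_general lam hlam u v hu hv hu0 hu1 hv1 huv
end

section
/- Let d ≥ 1 be a natural number, let α ∈ (0,2] with α < d, let γ ∈ ℝ and c > 0. For x ∈ ℝ^d put I(x) := ∫_{{y ∈ ℝ^d : |y| ≥ 1}} |x−y|^{α−d} · |y|^{−γ} (|y|^c − 1) dy (Lebesgue integral). Then the following are equivalent: (a) c < γ − α; (b) I(x) < ∞ for every x ∈ ℝ^d; (c) I(x) < ∞ for some x ∈ ℝ^d. -/
open MeasureTheory Metric Set

/-!
Write `t = α - d`. Split `{‖y‖ ≥ 1}` at a radius `R ≥ 2‖x‖` with `R ^ c ≥ 2`. On the compact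
annulus `1 ≤ ‖y‖ ≤ R` the radial factor `‖y‖ ^ (-γ) * (‖y‖ ^ c - 1)` is continuous, and
`‖x - y‖ ^ t` is locally integrable because `t > -d`, so that piece is always finite. For
`‖y‖ ≥ R`, both `‖x - y‖ / ‖y‖` and `(‖y‖ ^ c - 1) / ‖y‖ ^ c` lie in `[1/2, 2]`, so the integrand is
comparable to `‖y‖ ^ (t + c - γ)`, which by polar coordinates is integrable at infinity exactly
when `t + c - γ < -d`, i.e. `c < γ - α`. This condition does not involve `x`.
-/

theorem rpow_le_two_rpow_abs_mul_rpow {a b : ℝ} (t : ℝ) (ha : 0 < a) (hab : b ≤ 2 * a)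
    (hba : a ≤ 2 * b) : a ^ t ≤ 2 ^ |t| * b ^ t := by
  have hb : 0 < b := by linarith
  rcases le_or_gt 0 t with ht | ht
  · calc a ^ t ≤ (2 * b) ^ t := Real.rpow_le_rpow ha.le hba ht
      _ = 2 ^ |t| * b ^ t := by rw [abs_of_nonneg ht, Real.mul_rpow zero_le_two hb.le]
  · calc a ^ t ≤ (2⁻¹ * b) ^ t := Real.rpow_le_rpow_of_nonpos (by positivity) (by linarith) ht.le
      _ = 2 ^ |t| * b ^ t := by
        rw [abs_of_neg ht, Real.mul_rpow (by norm_num) hb.le, Real.inv_rpow zero_le_two,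
          Real.rpow_neg zero_le_two]

section SeminormedAddCommGroup

variable {E : Type*} [SeminormedAddCommGroup E]

theorem norm_le_two_mul_norm_sub {x y : E} (hxy : 2 * ‖x‖ ≤ ‖y‖) : ‖y‖ ≤ 2 * ‖x - y‖ := by
  have := norm_sub_norm_le y x
  rw [norm_sub_rev] at this
  linarith

theorem norm_sub_le_two_mul_norm {x y : E} (hxy : 2 * ‖x‖ ≤ ‖y‖) : ‖x - y‖ ≤ 2 * ‖y‖ := by
  have := norm_sub_le x y
  linarith [norm_nonneg x]

variable (t γ c : ℝ)

noncomputable def rieszIntegrand (x y : E) : ℝ := ‖x - y‖ ^ t * (‖y‖ ^ (-γ) * (‖y‖ ^ c - 1))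

variable {t γ c}

theorem rieszIntegrand_nonneg (hc : 0 ≤ c) (x : E) {y : E} (hy : 1 ≤ ‖y‖) :
    0 ≤ rieszIntegrand t γ c x y := by
  have hyc : 1 ≤ ‖y‖ ^ c := Real.one_le_rpow hy hc
  exact mul_nonneg (by positivity) (mul_nonneg (by positivity) (by linarith))

theorem rieszIntegrand_le (hc : 0 ≤ c) {x y : E} (hxy : 2 * ‖x‖ ≤ ‖y‖) (hy : 1 ≤ ‖y‖) :
    rieszIntegrand t γ c x y ≤ 2 ^ |t| * ‖y‖ ^ (t + c - γ) := by
  have hy0 : 0 < ‖y‖ := by linarith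
  have hxy0 : 0 < ‖x - y‖ := by linarith [norm_le_two_mul_norm_sub hxy]
  have hyc : 1 ≤ ‖y‖ ^ c := Real.one_le_rpow hy hc
  have hγ := Real.rpow_nonneg hy0.le (-γ)
  calc rieszIntegrand t γ c x y
      ≤ (2 ^ |t| * ‖y‖ ^ t) * (‖y‖ ^ (-γ) * ‖y‖ ^ c) := by
        refine mul_le_mul ?_ ?_ (mul_nonneg hγ (by linarith)) (by positivity)
        · exact rpow_le_two_rpow_abs_mul_rpow t hxy0 (norm_le_two_mul_norm_sub hxy)
            (norm_sub_le_two_mul_norm hxy)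
        · exact mul_le_mul_of_nonneg_left (by linarith) hγ
    _ = 2 ^ |t| * ‖y‖ ^ (t + c - γ) := by
        rw [mul_assoc, ← Real.rpow_add hy0, ← Real.rpow_add hy0]; ring_nf

theorem norm_rpow_le_rieszIntegrand {x y : E} (hxy : 2 * ‖x‖ ≤ ‖y‖) (hy : 0 < ‖y‖)
    (hyc : 2 ≤ ‖y‖ ^ c) : ‖y‖ ^ (t + c - γ) ≤ 2 ^ (|t| + 1) * rieszIntegrand t γ c x y := by
  have hγ := Real.rpow_nonneg hy.le (-γ)
  calc ‖y‖ ^ (t + c - γ) = ‖y‖ ^ t * (‖y‖ ^ (-γ) * ‖y‖ ^ c) := by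
        rw [← Real.rpow_add hy, ← Real.rpow_add hy]; ring_nf
    _ ≤ (2 ^ |t| * ‖x - y‖ ^ t) * (2 * (‖y‖ ^ (-γ) * (‖y‖ ^ c - 1))) := by
        refine mul_le_mul ?_ ?_ (by positivity) (by positivity)
        · exact rpow_le_two_rpow_abs_mul_rpow t hy (norm_sub_le_two_mul_norm hxy)
            (norm_le_two_mul_norm_sub hxy)
        · nlinarith
    _ = 2 ^ (|t| + 1) * rieszIntegrand t γ c x y := by
        rw [Real.rpow_add_one two_ne_zero, rieszIntegrand]; ring

end SeminormedAddCommGroup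

theorem measurable_rieszIntegrand {E : Type*} [NormedAddCommGroup E] [MeasurableSpace E]
    [BorelSpace E] (t γ c : ℝ) (x : E) : Measurable (rieszIntegrand t γ c x) := by
  unfold rieszIntegrand; fun_prop

section AddHaar

variable {E : Type*} [NormedAddCommGroup E] [NormedSpace ℝ E] [FiniteDimensional ℝ E]
  [MeasurableSpace E] [BorelSpace E] (μ : Measure E) [μ.IsAddHaarMeasure] [Nontrivial E]

theorem integrableOn_norm_rpow_setOf_le_norm_iff {R : ℝ} (hR : 0 < R) (s : ℝ) :
    IntegrableOn (fun y : E ↦ ‖y‖ ^ s) {y | R ≤ ‖y‖} μ ↔ s < -Module.finrank ℝ E := by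
  have hd : 0 < Module.finrank ℝ E := Module.finrank_pos
  have hind : {y : E | R ≤ ‖y‖}.indicator (fun y ↦ ‖y‖ ^ s) =
      fun y ↦ (Ici R).indicator (· ^ s) ‖y‖ := by
    ext y; simp [indicator]
  rw [← integrable_indicator_iff (measurableSet_le measurable_const measurable_norm), hind,
    integrable_fun_norm_addHaar μ]
  have hsmul : (fun r : ℝ ↦ r ^ (Module.finrank ℝ E - 1) • (Ici R).indicator (· ^ s) r) =
      (Ici R).indicator (fun r ↦ r ^ (Module.finrank ℝ E - 1) * r ^ s) := by
    ext r; by_cases hr : r ∈ Ici R <;> simp [hr]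
  rw [hsmul, integrableOn_indicator_iff measurableSet_Ici,
    inter_eq_left.2 (Ici_subset_Ioi.2 hR), integrableOn_Ici_iff_integrableOn_Ioi,
    integrableOn_congr_fun (g := fun r ↦ r ^ (s + Module.finrank ℝ E - 1)) _ measurableSet_Ioi,
    integrableOn_Ioi_rpow_iff hR]
  · constructor <;> intro h <;> linarith
  · intro r hr
    simp only
    rw [← Real.rpow_natCast, Nat.cast_sub hd, Nat.cast_one, ← Real.rpow_add (hR.trans hr)]
    ring_nf

theorem integrableOn_norm_sub_rpow {t : ℝ} (ht : -(Module.finrank ℝ E : ℝ) < t) (x : E)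
    {s : Set E} (hs : Bornology.IsBounded s) : IntegrableOn (fun y ↦ ‖x - y‖ ^ t) s μ := by
  obtain ⟨r, hr⟩ := hs.subset_closedBall x
  have hloc : LocallyIntegrable (fun y : E ↦ ‖y‖ ^ t) μ :=
    locallyIntegrable_of_norm_le_rpow (C := 1) (α := -t) Module.finrank_pos (by linarith)
      (.of_forall fun y ↦ by simp [abs_of_nonneg (Real.rpow_nonneg (norm_nonneg y) t)])
      (measurable_norm.pow_const t).aestronglyMeasurable
  have hpre : closedBall x r = (x - ·) ⁻¹' closedBall 0 r := by
    ext y; simp [dist_eq_norm, norm_sub_rev]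
  refine IntegrableOn.mono_set ?_ hr
  rw [hpre]
  exact ((Measure.measurePreserving_sub_left μ x).integrableOn_comp_preimage
    (MeasurableEquiv.subLeft x).measurableEmbedding).2
    (hloc.integrableOn_isCompact (isCompact_closedBall 0 r))

variable {t γ c : ℝ}

theorem integrableOn_rieszIntegrand_annulus (ht : -(Module.finrank ℝ E : ℝ) < t) (x : E) (R : ℝ) :
    IntegrableOn (rieszIntegrand t γ c x) ({y | 1 ≤ ‖y‖} ∩ closedBall 0 R) μ := by
  have hK : IsCompact ({y : E | 1 ≤ ‖y‖} ∩ closedBall 0 R) :=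
    (isCompact_closedBall 0 R).inter_left (isClosed_le continuous_const continuous_norm)
  have hne : ∀ y ∈ {y : E | 1 ≤ ‖y‖} ∩ closedBall 0 R, ‖y‖ ≠ 0 :=
    fun y hy ↦ (zero_lt_one.trans_le hy.1).ne'
  refine (integrableOn_norm_sub_rpow μ ht x hK.isBounded).mul_continuousOn ?_ hK
  exact ((continuous_norm.continuousOn.rpow_const fun y hy ↦ .inl (hne y hy)).mul
    ((continuous_norm.continuousOn.rpow_const fun y hy ↦ .inl (hne y hy)).sub continuousOn_const))

theorem integrableOn_rieszIntegrand_setOf_le_norm_iff (hc : 0 < c) (x : E) {R : ℝ}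
    (hxR : 2 * ‖x‖ ≤ R) (hR : 1 ≤ R) (hRc : 2 ≤ R ^ c) :
    IntegrableOn (rieszIntegrand t γ c x) {y | R ≤ ‖y‖} μ ↔
      t + c - γ < -Module.finrank ℝ E := by
  rw [← integrableOn_norm_rpow_setOf_le_norm_iff μ (zero_lt_one.trans_le hR)]
  have hmeas : MeasurableSet {y : E | R ≤ ‖y‖} := measurableSet_le measurable_const measurable_norm
  constructor
  · intro h
    refine Integrable.mono' (h.const_mul (2 ^ (|t| + 1)))
      (measurable_norm.pow_const _).aestronglyMeasurable (ae_restrict_of_forall_mem hmeas ?_)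
    intro y (hy : R ≤ ‖y‖)
    rw [Real.norm_of_nonneg (by positivity)]
    exact norm_rpow_le_rieszIntegrand (hxR.trans hy) (by linarith)
      (hRc.trans (Real.rpow_le_rpow (by linarith) hy hc.le))
  · intro h
    refine Integrable.mono' (h.const_mul (2 ^ |t|))
      (measurable_rieszIntegrand t γ c x).aestronglyMeasurable (ae_restrict_of_forall_mem hmeas ?_)
    intro y (hy : R ≤ ‖y‖)
    rw [Real.norm_of_nonneg (rieszIntegrand_nonneg hc.le x (hR.trans hy))]
    exact rieszIntegrand_le hc.le (hxR.trans hy) (hR.trans hy)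

theorem integrableOn_rieszIntegrand_iff (ht : -(Module.finrank ℝ E : ℝ) < t) (hc : 0 < c)
    (x : E) : IntegrableOn (rieszIntegrand t γ c x) {y | 1 ≤ ‖y‖} μ ↔
      t + c - γ < -Module.finrank ℝ E := by
  set R := max (2 * ‖x‖) (2 ^ c⁻¹)
  have hR : 1 ≤ R := le_max_of_le_right (Real.one_le_rpow one_le_two (inv_nonneg.2 hc.le))
  have hRc : 2 ≤ R ^ c := by
    calc (2 : ℝ) = (2 ^ c⁻¹) ^ c := by rw [← Real.rpow_mul zero_le_two, inv_mul_cancel₀ hc.ne',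
          Real.rpow_one]
      _ ≤ R ^ c := Real.rpow_le_rpow (by positivity) (le_max_right _ _) hc.le
  rw [← integrableOn_rieszIntegrand_setOf_le_norm_iff μ hc x (le_max_left _ _) hR hRc]
  refine ⟨fun h ↦ h.mono_set fun y hy ↦ hR.trans hy, fun h ↦ ?_⟩
  refine ((integrableOn_rieszIntegrand_annulus μ ht x R).union h).mono_set fun y hy ↦ ?_
  rcases le_total ‖y‖ R with hyR | hyR
  · exact .inl ⟨hy, mem_closedBall_zero_iff.2 hyR⟩
  · exact .inr hyR

theorem lintegral_rieszIntegrand_lt_top_iff (ht : -(Module.finrank ℝ E : ℝ) < t) (hc : 0 < c)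
    (x : E) : ∫⁻ y in {y | 1 ≤ ‖y‖}, ENNReal.ofReal (rieszIntegrand t γ c x y) ∂μ < ⊤ ↔
      t + c - γ < -Module.finrank ℝ E := by
  have hmeas : MeasurableSet {y : E | 1 ≤ ‖y‖} := measurableSet_le measurable_const measurable_norm
  rw [lt_top_iff_ne_top, lintegral_ofReal_ne_top_iff_integrable
    (measurable_rieszIntegrand t γ c x).aestronglyMeasurable
    (ae_restrict_of_forall_mem hmeas fun y hy ↦ rieszIntegrand_nonneg hc.le x hy)]
  exact integrableOn_rieszIntegrand_iff μ ht hc x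

end AddHaar

theorem stmt_13_general (d : ℕ) (hd : 1 ≤ d) (α : ℝ) (hα : α ∈ Set.Ioc (0 : ℝ) 2)
    (γ c : ℝ) (hc : 0 < c) :
    (c < γ - α ↔ ∀ x : EuclideanSpace ℝ (Fin d),
      (∫⁻ y in {y : EuclideanSpace ℝ (Fin d) | 1 ≤ ‖y‖},
        ENNReal.ofReal (‖x - y‖ ^ (α - (d : ℝ)) * (‖y‖ ^ (-γ) * (‖y‖ ^ c - 1)))) < ⊤) ∧
    ((∀ x : EuclideanSpace ℝ (Fin d),
      (∫⁻ y in {y : EuclideanSpace ℝ (Fin d) | 1 ≤ ‖y‖},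
        ENNReal.ofReal (‖x - y‖ ^ (α - (d : ℝ)) * (‖y‖ ^ (-γ) * (‖y‖ ^ c - 1)))) < ⊤) ↔
     (∃ x : EuclideanSpace ℝ (Fin d),
      (∫⁻ y in {y : EuclideanSpace ℝ (Fin d) | 1 ≤ ‖y‖},
        ENNReal.ofReal (‖x - y‖ ^ (α - (d : ℝ)) * (‖y‖ ^ (-γ) * (‖y‖ ^ c - 1)))) < ⊤)) := by
  have hdim : Module.finrank ℝ (EuclideanSpace ℝ (Fin d)) = d := finrank_euclideanSpace_fin
  have : Nontrivial (EuclideanSpace ℝ (Fin d)) :=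
    Module.nontrivial_of_finrank_pos (R := ℝ) (by rw [hdim]; exact hd)
  have key : ∀ x : EuclideanSpace ℝ (Fin d),
      ∫⁻ y in {y | 1 ≤ ‖y‖}, ENNReal.ofReal (rieszIntegrand (α - d) γ c x y) < ⊤ ↔ c < γ - α := by
    intro x
    rw [lintegral_rieszIntegrand_lt_top_iff volume (by rw [hdim]; linarith [hα.1]) hc x, hdim]
    constructor <;> intro h <;> linarith
  simp only [rieszIntegrand] at key
  simp [key]

theorem stmt_13 (d : ℕ) (hd : 1 ≤ d) (α : ℝ) (hα : α ∈ Set.Ioc (0 : ℝ) 2) (hαd : α < d)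
    (γ c : ℝ) (hc : 0 < c) :
    (c < γ - α ↔ ∀ x : EuclideanSpace ℝ (Fin d),
      (∫⁻ y in {y : EuclideanSpace ℝ (Fin d) | 1 ≤ ‖y‖},
        ENNReal.ofReal (‖x - y‖ ^ (α - (d : ℝ)) * (‖y‖ ^ (-γ) * (‖y‖ ^ c - 1)))) < ⊤) ∧
    ((∀ x : EuclideanSpace ℝ (Fin d),
      (∫⁻ y in {y : EuclideanSpace ℝ (Fin d) | 1 ≤ ‖y‖},
        ENNReal.ofReal (‖x - y‖ ^ (α - (d : ℝ)) * (‖y‖ ^ (-γ) * (‖y‖ ^ c - 1)))) < ⊤) ↔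
     (∃ x : EuclideanSpace ℝ (Fin d),
      (∫⁻ y in {y : EuclideanSpace ℝ (Fin d) | 1 ≤ ‖y‖},
        ENNReal.ofReal (‖x - y‖ ^ (α - (d : ℝ)) * (‖y‖ ^ (-γ) * (‖y‖ ^ c - 1)))) < ⊤)) :=
  stmt_13_general d hd α hα γ c hc
end
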